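/- In the twisted Baby Fock model with γ_j = μ_j^{−1} β_j* + μ_j β_{−j}, the vector x_∅ is separating for the unital *-algebra Γ of operators on H_ε generated by γ_1, …, γ_k: if T ∈ Γ and T x_∅ = 0, then T = 0. -/

import Mathlib

noncomputable section BabyFock

variable {I : Type*} [Fintype I] [LinearOrder I]

/-- The left creation operator `β_i*` of the Baby Fock model, acting on the Hilbert space with
orthonormal basis `(x_A)_{A ⊆ I}`:  `β_i*(x_A) = (∏_{j ∈ A, j < i} ε i j) • x_{A ∪ {i}}` if
`i ∉ A`, and `β_i*(x_A) = 0` if `i ∈ A`. -/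
def crea (ε : I → I → ℂ) (i : I) :
    EuclideanSpace ℂ (Finset I) →L[ℂ] EuclideanSpace ℂ (Finset I) :=
  Matrix.toEuclideanCLM (𝕜 := ℂ)
    (Matrix.of fun B A : Finset I =>
      if i ∉ A ∧ B = insert i A then ∏ j ∈ A.filter (· < i), ε i j else 0)

/-- The left annihilation operator `β_i` (the adjoint of `β_i*`):
`β_i(x_A) = (∏_{j ∈ A, j < i} ε i j) • x_{A \ {i}}` if `i ∈ A`, and `0` otherwise. -/
def anni (ε : I → I → ℂ) (i : I) :
    EuclideanSpace ℂ (Finset I) →L[ℂ] EuclideanSpace ℂ (Finset I) :=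
  Matrix.toEuclideanCLM (𝕜 := ℂ)
    (Matrix.of fun B A : Finset I =>
      if i ∈ A ∧ B = A.erase i then ∏ j ∈ A.filter (· < i), ε i j else 0)

/-- The right creation operator `α_i*`:
`α_i*(x_A) = (∏_{j ∈ A, j > i} ε i j) • x_{A ∪ {i}}` if `i ∉ A`, and `0` otherwise. -/
def creaR (ε : I → I → ℂ) (i : I) :
    EuclideanSpace ℂ (Finset I) →L[ℂ] EuclideanSpace ℂ (Finset I) :=
  Matrix.toEuclideanCLM (𝕜 := ℂ)
    (Matrix.of fun B A : Finset I =>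
      if i ∉ A ∧ B = insert i A then ∏ j ∈ A.filter (i < ·), ε i j else 0)

/-- The right annihilation operator `α_i` (the adjoint of `α_i*`):
`α_i(x_A) = (∏_{j ∈ A, j > i} ε i j) • x_{A \ {i}}` if `i ∈ A`, and `0` otherwise. -/
def anniR (ε : I → I → ℂ) (i : I) :
    EuclideanSpace ℂ (Finset I) →L[ℂ] EuclideanSpace ℂ (Finset I) :=
  Matrix.toEuclideanCLM (𝕜 := ℂ)
    (Matrix.of fun B A : Finset I =>
      if i ∈ A ∧ B = A.erase i then ∏ j ∈ A.filter (i < ·), ε i j else 0)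

end BabyFock

noncomputable section

/-- The index set `I = {−k, …, −1} ∪ {1, …, k}` of the twisted Baby Fock model, as a subtype
of `ℤ`, with its natural linear order. -/
abbrev Ik (k : ℕ) : Type := {i : ℤ // i ∈ (Finset.Icc (-(k : ℤ)) (k : ℤ)).erase 0}

/-- The map `i ↦ -i` on the index set. -/
def negI {k : ℕ} (i : Ik k) : Ik k :=
  ⟨-i.1, by
    have h := i.2
    simp only [Finset.mem_erase, Finset.mem_Icc] at h ⊢
    omega⟩

/-- The map `i ↦ |i|` on the index set. -/
def absI {k : ℕ} (i : Ik k) : Ik k :=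
  ⟨|i.1|, by
    have h := i.2
    simp only [Finset.mem_erase, Finset.mem_Icc] at h ⊢
    rcases abs_cases i.1 with h' | h' <;> omega⟩

/-- For `j ∈ {1, …, k}` (encoded as `j : Fin k`), the corresponding positive element of the
index set. -/
def posIdx {k : ℕ} (j : Fin k) : Ik k :=
  ⟨(j : ℤ) + 1, by
    have h := j.isLt
    simp only [Finset.mem_erase, Finset.mem_Icc]
    omega⟩

/-- The generalized semi-circular operator `γ_j = μ_j⁻¹ β_j* + μ_j β_{−j}` of the twisted
Baby Fock model, for `j ∈ {1, …, k}`. -/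
def gam {k : ℕ} (ε : Ik k → Ik k → ℂ) (μ : Fin k → ℝ) (j : Fin k) :
    EuclideanSpace ℂ (Finset (Ik k)) →L[ℂ] EuclideanSpace ℂ (Finset (Ik k)) :=
  ((μ j : ℂ))⁻¹ • crea ε (posIdx j) + (μ j : ℂ) • anni ε (negI (posIdx j))


/-!
The right-handed analogues `γʳ_j = μ_j⁻¹ α*_{−j} + μ_j α_j` of the generators commute with every
`γ_i`, and so do their adjoints. For distinct indices this is a sign computation; for equal
indices the commutators `[α_j, β*_j]` and `[β_{−j}, α*_{−j}]` are the diagonal operators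
`x_A ↦ (∏_{l ∈ A} ε(±j, l)) x_A`, which coincide by the twist condition and so cancel.
Hence `Γ` lies in the commutant of `{γʳ_j, (γʳ_j)*}`, and `ker T` is invariant under these
operators for `T ∈ Γ`. Applied to `x_{A ∖ {i}}`, one of them produces a nonzero multiple of `x_A`
plus a multiple of some `x_B` with `B ⊂ A`, so by induction on `A` every `x_A` lies in `ker T`.
-/

open Finset EuclideanSpace

section Basis

variable {n : Type*} [Fintype n] [DecidableEq n]

theorem toEuclideanCLM_single_apply (M : Matrix n n ℂ) (C B : n) :
    Matrix.toEuclideanCLM (𝕜 := ℂ) M (single C 1) B = M B C := by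
  change Matrix.toLin' M (WithLp.ofLp (single C (1 : ℂ))) B = M B C
  simp [PiLp.ofLp_single, Matrix.mulVec_single]

theorem EuclideanSpace.clm_ext_single {T S : EuclideanSpace ℂ n →L[ℂ] EuclideanSpace ℂ n}
    (h : ∀ i, T (single i 1) = S (single i 1)) : T = S :=
  ContinuousLinearMap.coe_injective <|
    (EuclideanSpace.basisFun n ℂ).toBasis.ext fun i => by simpa using h i

end Basis

theorem Finset.prod_filter_lt_mul_prod_filter_gt {α M : Type*} [LinearOrder α] [CommMonoid M]
    {s : Finset α} {a : α} (f : α → M) (h : a ∉ s) :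
    (∏ x ∈ s.filter (· < a), f x) * (∏ x ∈ s.filter (a < ·), f x) = ∏ x ∈ s, f x := by
  rw [← prod_filter_mul_prod_filter_not s (· < a)]
  congr 2
  refine filter_congr fun x hx => ?_
  rw [not_lt, lt_iff_le_and_ne]
  exact ⟨And.left, fun hle => ⟨hle, fun he => h (he ▸ hx)⟩⟩

section Operators

variable {I : Type*} [Fintype I] [LinearOrder I] (ε : I → I → ℂ) (i : I) {A : Finset I}

theorem crea_single (h : i ∉ A) :
    crea ε i (single A 1) = (∏ j ∈ A.filter (· < i), ε i j) • single (insert i A) 1 := by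
  ext B
  rw [crea, toEuclideanCLM_single_apply]
  by_cases hB : B = insert i A <;> simp [h, hB]

theorem crea_single_of_mem (h : i ∈ A) : crea ε i (single A 1) = 0 := by
  ext B
  rw [crea, toEuclideanCLM_single_apply]
  simp [h]

theorem anni_single (h : i ∈ A) :
    anni ε i (single A 1) = (∏ j ∈ A.filter (· < i), ε i j) • single (A.erase i) 1 := by
  ext B
  rw [anni, toEuclideanCLM_single_apply]
  by_cases hB : B = A.erase i <;> simp [h, hB]

theorem anni_single_of_notMem (h : i ∉ A) : anni ε i (single A 1) = 0 := by
  ext B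
  rw [anni, toEuclideanCLM_single_apply]
  simp [h]

theorem creaR_single (h : i ∉ A) :
    creaR ε i (single A 1) = (∏ j ∈ A.filter (i < ·), ε i j) • single (insert i A) 1 := by
  ext B
  rw [creaR, toEuclideanCLM_single_apply]
  by_cases hB : B = insert i A <;> simp [h, hB]

theorem creaR_single_of_mem (h : i ∈ A) : creaR ε i (single A 1) = 0 := by
  ext B
  rw [creaR, toEuclideanCLM_single_apply]
  simp [h]

theorem anniR_single (h : i ∈ A) :
    anniR ε i (single A 1) = (∏ j ∈ A.filter (i < ·), ε i j) • single (A.erase i) 1 := by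
  ext B
  rw [anniR, toEuclideanCLM_single_apply]
  by_cases hB : B = A.erase i <;> simp [h, hB]

theorem anniR_single_of_notMem (h : i ∉ A) : anniR ε i (single A 1) = 0 := by
  ext B
  rw [anniR, toEuclideanCLM_single_apply]
  simp [h]

theorem exists_anniR_single_eq_smul (A : Finset I) :
    ∃ c : ℂ, anniR ε i (single A 1) = c • single (A.erase i) 1 := by
  by_cases h : i ∈ A
  · exact ⟨_, anniR_single ε i h⟩
  · exact ⟨0, by rw [anniR_single_of_notMem ε i h, zero_smul]⟩

theorem star_toEuclideanCLM_ite_insert (f g : Finset I → ℂ)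
    (hfg : ∀ A, i ∈ A → star (f (A.erase i)) = g A) :
    star (Matrix.toEuclideanCLM (𝕜 := ℂ) (Matrix.of fun B A : Finset I =>
        if i ∉ A ∧ B = insert i A then f A else 0)) =
      Matrix.toEuclideanCLM (𝕜 := ℂ) (Matrix.of fun B A : Finset I =>
        if i ∈ A ∧ B = A.erase i then g A else 0) := by
  rw [← map_star, Matrix.star_eq_conjTranspose]
  congr 1
  ext B A
  rw [Matrix.conjTranspose_apply, Matrix.of_apply, Matrix.of_apply]
  by_cases h : i ∈ A ∧ B = A.erase i
  · obtain ⟨hA, rfl⟩ := h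
    rw [if_pos ⟨notMem_erase i A, (insert_erase hA).symm⟩, if_pos ⟨hA, rfl⟩, hfg A hA]
  · have h' : ¬ (i ∉ B ∧ A = insert i B) := by
      rintro ⟨hB, rfl⟩
      exact h ⟨mem_insert_self i B, (erase_insert hB).symm⟩
    rw [if_neg h, if_neg h', star_zero]

variable {ε}

theorem star_creaR (hreal : ∀ j, star (ε i j) = ε i j) : star (creaR ε i) = anniR ε i :=
  star_toEuclideanCLM_ite_insert i _ _ fun A _ => by
    rw [star_prod, filter_erase, erase_eq_of_notMem (by simp)]
    exact prod_congr rfl fun j _ => hreal j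

end Operators

section Commutation

variable {I : Type*} [Fintype I] [LinearOrder I] {ε : I → I → ℂ} {i j : I}

theorem commute_crea_creaR (hij : ε i j = ε j i) : Commute (crea ε i) (creaR ε j) := by
  refine EuclideanSpace.clm_ext_single fun A => ?_
  simp only [mul_apply_eq_comp]
  by_cases hj : j ∈ A
  · rw [creaR_single_of_mem ε j hj, map_zero]
    by_cases hi : i ∈ A
    · rw [crea_single_of_mem ε i hi, map_zero]
    · rw [crea_single ε i hi, map_smul, creaR_single_of_mem ε j (mem_insert_of_mem hj),
        smul_zero]
  by_cases hi : i ∈ A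
  · rw [crea_single_of_mem ε i hi, map_zero, creaR_single ε j hj, map_smul,
      crea_single_of_mem ε i (mem_insert_of_mem hi), smul_zero]
  obtain rfl | hne := eq_or_ne i j
  · rw [creaR_single ε i hj, map_smul, crea_single_of_mem ε i (mem_insert_self _ _),
      crea_single ε i hi, map_smul, creaR_single_of_mem ε i (mem_insert_self _ _),
      smul_zero, smul_zero]
  rw [creaR_single ε j hj, map_smul, crea_single ε i (by simp [hi, hne]),
    crea_single ε i hi, map_smul, creaR_single ε j (by simp [hj, hne.symm]),
    smul_smul, smul_smul, insert_comm i j A, filter_insert, filter_insert]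
  congr 1
  split_ifs with h
  · rw [prod_insert (by simp [hj]), prod_insert (by simp [hi]), hij]
    ring
  · ring

theorem commute_anni_anniR (hij : ε i j = ε j i) : Commute (anni ε i) (anniR ε j) := by
  refine EuclideanSpace.clm_ext_single fun A => ?_
  simp only [mul_apply_eq_comp]
  by_cases hj : j ∈ A
  swap
  · rw [anniR_single_of_notMem ε j hj, map_zero]
    by_cases hi : i ∈ A
    · rw [anni_single ε i hi, map_smul,
        anniR_single_of_notMem ε j (fun h => hj (mem_of_mem_erase h)), smul_zero]
    · rw [anni_single_of_notMem ε i hi, map_zero]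
  by_cases hi : i ∈ A
  swap
  · rw [anni_single_of_notMem ε i hi, map_zero, anniR_single ε j hj, map_smul,
      anni_single_of_notMem ε i (fun h => hi (mem_of_mem_erase h)), smul_zero]
  obtain rfl | hne := eq_or_ne i j
  · rw [anniR_single ε i hj, map_smul, anni_single_of_notMem ε i (notMem_erase _ _),
      anni_single ε i hi, map_smul, anniR_single_of_notMem ε i (notMem_erase _ _),
      smul_zero, smul_zero]
  rw [anniR_single ε j hj, map_smul, anni_single ε i (mem_erase.2 ⟨hne, hi⟩),
    anni_single ε i hi, map_smul, anniR_single ε j (mem_erase.2 ⟨hne.symm, hj⟩),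
    smul_smul, smul_smul, erase_right_comm (s := A) (a := j) (b := i), filter_erase,
    filter_erase]
  congr 1
  by_cases h : j < i
  · rw [← mul_prod_erase (A.filter (· < i)) (ε i) (mem_filter.2 ⟨hj, h⟩),
      ← mul_prod_erase (A.filter (j < ·)) (ε j) (mem_filter.2 ⟨hi, h⟩), hij]
    ring
  · rw [erase_eq_of_notMem (by simp [h]), erase_eq_of_notMem (by simp [h]), mul_comm]

theorem commute_crea_anniR (hij : ε i j * ε j i = 1) (hne : i ≠ j) :
    Commute (crea ε i) (anniR ε j) := by
  refine EuclideanSpace.clm_ext_single fun A => ?_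
  simp only [mul_apply_eq_comp]
  by_cases hj : j ∈ A
  swap
  · rw [anniR_single_of_notMem ε j hj, map_zero]
    by_cases hi : i ∈ A
    · rw [crea_single_of_mem ε i hi, map_zero]
    · rw [crea_single ε i hi, map_smul, anniR_single_of_notMem ε j (by simp [hj, hne.symm]),
        smul_zero]
  by_cases hi : i ∈ A
  · rw [anniR_single ε j hj, map_smul, crea_single_of_mem ε i (mem_erase.2 ⟨hne, hi⟩),
      crea_single_of_mem ε i hi, map_zero, smul_zero]
  rw [anniR_single ε j hj, map_smul, crea_single ε i (fun h => hi (mem_of_mem_erase h)),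
    crea_single ε i hi, map_smul, anniR_single ε j (mem_insert_of_mem hj),
    smul_smul, smul_smul, erase_insert_of_ne hne, filter_erase, filter_insert]
  congr 1
  by_cases h : j < i
  · rw [if_pos h, ← mul_prod_erase (A.filter (· < i)) (ε i) (mem_filter.2 ⟨hj, h⟩),
      prod_insert (by simp [hi])]
    linear_combination -(∏ x ∈ (A.filter (· < i)).erase j, ε i x) *
      (∏ x ∈ A.filter (j < ·), ε j x) * hij
  · rw [if_neg h, erase_eq_of_notMem (by simp [h]), mul_comm]

theorem commute_anni_creaR (hji : ε j i * ε i j = 1) (hne : i ≠ j) :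
    Commute (anni ε i) (creaR ε j) := by
  refine EuclideanSpace.clm_ext_single fun A => ?_
  simp only [mul_apply_eq_comp]
  by_cases hj : j ∈ A
  · rw [creaR_single_of_mem ε j hj, map_zero]
    by_cases hi : i ∈ A
    · rw [anni_single ε i hi, map_smul, creaR_single_of_mem ε j (mem_erase.2 ⟨hne.symm, hj⟩),
        smul_zero]
    · rw [anni_single_of_notMem ε i hi, map_zero]
  by_cases hi : i ∈ A
  swap
  · rw [anni_single_of_notMem ε i hi, map_zero, creaR_single ε j hj, map_smul,
      anni_single_of_notMem ε i (by simp [hi, hne]), smul_zero]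
  rw [creaR_single ε j hj, map_smul, anni_single ε i (mem_insert_of_mem hi),
    anni_single ε i hi, map_smul, creaR_single ε j (fun h => hj (mem_of_mem_erase h)),
    smul_smul, smul_smul, erase_insert_of_ne hne.symm, filter_insert, filter_erase]
  congr 1
  by_cases h : j < i
  · rw [if_pos h, prod_insert (by simp [hj]),
      ← mul_prod_erase (A.filter (j < ·)) (ε j) (mem_filter.2 ⟨hi, h⟩)]
    linear_combination (∏ x ∈ A.filter (· < i), ε i x) *
      (∏ x ∈ (A.filter (j < ·)).erase i, ε j x) * hji
  · rw [if_neg h, erase_eq_of_notMem (by simp [h]), mul_comm]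

end Commutation

section SameIndex

variable {I : Type*} [Fintype I] [LinearOrder I] (ε : I → I → ℂ) (i : I) {A : Finset I}

def signOp : EuclideanSpace ℂ (Finset I) →L[ℂ] EuclideanSpace ℂ (Finset I) :=
  Matrix.toEuclideanCLM (𝕜 := ℂ) (Matrix.diagonal fun A : Finset I => ∏ l ∈ A, ε i l)

theorem signOp_single : signOp ε i (single A 1) = (∏ l ∈ A, ε i l) • single A 1 := by
  ext B
  rw [signOp, toEuclideanCLM_single_apply]
  obtain rfl | hB := eq_or_ne B A <;> simp [Matrix.diagonal_apply_ne, *]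

variable {ε i}

theorem anniR_mul_crea_self (hii : ε i i = -1) :
    anniR ε i * crea ε i = crea ε i * anniR ε i + signOp ε i := by
  refine EuclideanSpace.clm_ext_single fun A => ?_
  simp only [mul_apply_eq_comp, add_apply]
  by_cases hi : i ∈ A
  · rw [crea_single_of_mem ε i hi, map_zero, anniR_single ε i hi, map_smul,
      crea_single ε i (notMem_erase _ _), signOp_single, smul_smul, insert_erase hi, ← add_smul,
      ← mul_prod_erase A _ hi, hii,
      ← prod_filter_lt_mul_prod_filter_gt (ε i) (notMem_erase i A), filter_erase, filter_erase,
      erase_eq_of_notMem (s := A.filter (· < i)) (by simp),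
      erase_eq_of_notMem (s := A.filter (i < ·)) (by simp)]
    ring_nf
    rw [zero_smul]
  · rw [anniR_single_of_notMem ε i hi, map_zero, zero_add, crea_single ε i hi, map_smul,
      anniR_single ε i (mem_insert_self _ _), signOp_single, smul_smul, erase_insert hi,
      filter_insert, if_neg (lt_irrefl i), prod_filter_lt_mul_prod_filter_gt (ε i) hi]

theorem anni_mul_creaR_self (hii : ε i i = -1) :
    anni ε i * creaR ε i = creaR ε i * anni ε i + signOp ε i := by
  refine EuclideanSpace.clm_ext_single fun A => ?_
  simp only [mul_apply_eq_comp, add_apply]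
  by_cases hi : i ∈ A
  · rw [creaR_single_of_mem ε i hi, map_zero, anni_single ε i hi, map_smul,
      creaR_single ε i (notMem_erase _ _), signOp_single, smul_smul, insert_erase hi, ← add_smul,
      ← mul_prod_erase A _ hi, hii,
      ← prod_filter_lt_mul_prod_filter_gt (ε i) (notMem_erase i A), filter_erase, filter_erase,
      erase_eq_of_notMem (s := A.filter (· < i)) (by simp),
      erase_eq_of_notMem (s := A.filter (i < ·)) (by simp)]
    ring_nf
    rw [zero_smul]
  · rw [anni_single_of_notMem ε i hi, map_zero, zero_add, creaR_single ε i hi, map_smul,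
      anni_single ε i (mem_insert_self _ _), signOp_single, smul_smul, erase_insert hi,
      filter_insert, if_neg (lt_irrefl i), mul_comm, prod_filter_lt_mul_prod_filter_gt (ε i) hi]

end SameIndex

theorem Commute.smul_add_smul {R A : Type*} [CommSemiring R] [Semiring A] [Algebra R A]
    {x y z w : A} (hxz : Commute x z) (hxw : Commute x w) (hyz : Commute y z)
    (hyw : Commute y w) (a b c d : R) : Commute (a • x + b • y) (c • z + d • w) :=
  (((hxz.smul_right c).add_right (hxw.smul_right d)).smul_left a).add_left
    (((hyz.smul_right c).add_right (hyw.smul_right d)).smul_left b)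

section TwistedIndex

variable {k : ℕ}

theorem posIdx_injective : Function.Injective (posIdx (k := k)) := fun m m' h => by
  have := congrArg Subtype.val h
  simp only [posIdx] at this
  exact Fin.ext (by omega)

theorem negI_injective : Function.Injective (negI (k := k)) := fun i i' h => by
  have := congrArg Subtype.val h
  simp only [negI, neg_inj] at this
  exact Subtype.ext this

theorem posIdx_ne_negI_posIdx (m m' : Fin k) : posIdx m ≠ negI (posIdx m') := fun h => by
  have := congrArg Subtype.val h
  simp only [posIdx, negI] at this
  omega

theorem absI_negI (i : Ik k) : absI (negI i) = absI i :=
  Subtype.ext (abs_neg i.1)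

theorem exists_eq_posIdx_or_eq_negI_posIdx (i : Ik k) :
    ∃ m, i = posIdx m ∨ i = negI (posIdx m) := by
  obtain ⟨hi0, hik⟩ := mem_erase.1 i.2
  rw [mem_Icc] at hik
  rcases lt_or_gt_of_ne hi0 with hneg | hpos
  · exact ⟨⟨(-i.1 - 1).toNat, by omega⟩, Or.inr (Subtype.ext (by simp only [negI, posIdx]; omega))⟩
  · exact ⟨⟨(i.1 - 1).toNat, by omega⟩, Or.inl (Subtype.ext (by simp only [posIdx]; omega))⟩

end TwistedIndex

noncomputable section RightGamma

variable {k : ℕ} {ε : Ik k → Ik k → ℂ} (μ : Fin k → ℝ)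

variable (ε) in
def gamR (j : Fin k) :
    EuclideanSpace ℂ (Finset (Ik k)) →L[ℂ] EuclideanSpace ℂ (Finset (Ik k)) :=
  ((μ j : ℂ))⁻¹ • creaR ε (negI (posIdx j)) + (μ j : ℂ) • anniR ε (posIdx j)

theorem star_gamR (hreal : ∀ a b, star (ε a b) = ε a b) (j : Fin k) :
    star (gamR ε μ j) =
      (μ j : ℂ) • creaR ε (posIdx j) + ((μ j : ℂ))⁻¹ • anniR ε (negI (posIdx j)) := by
  refine (star_add ((μ j : ℂ)⁻¹ • creaR ε (negI (posIdx j)))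
    ((μ j : ℂ) • anniR ε (posIdx j))).trans ?_
  rw [star_smul, star_smul, star_creaR _ (hreal _), ← star_creaR (posIdx j) (hreal _), star_star,
    add_comm]
  simp [Complex.conj_ofReal]

theorem signOp_negI (htw : ∀ a b, ε a b = ε (absI a) (absI b)) (i : Ik k) :
    signOp ε (negI i) = signOp ε i := by
  simp only [signOp, htw (negI i), htw i, absI_negI]

theorem commute_gam_gamR (hsym : ∀ a b, ε a b = ε b a) (hsq : ∀ a b, ε a b * ε b a = 1)
    (hdiag : ∀ a, ε a a = -1) (htw : ∀ a b, ε a b = ε (absI a) (absI b)) (m m' : Fin k) :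
    Commute (gam ε μ m) (gamR ε μ m') := by
  obtain rfl | hne := eq_or_ne m m'
  · have h := anni_mul_creaR_self (hdiag (negI (posIdx m)))
    rw [signOp_negI htw] at h
    simp only [Commute, SemiconjBy, gam, gamR, add_mul, mul_add, smul_mul_smul_comm,
      (commute_crea_creaR (hsym _ _)).eq, (commute_anni_anniR (hsym _ _)).eq,
      anniR_mul_crea_self (hdiag _), h]
    module
  · exact Commute.smul_add_smul (commute_crea_creaR (hsym _ _))
      (commute_crea_anniR (hsq _ _) (posIdx_injective.ne hne))
      (commute_anni_creaR (hsq _ _) (negI_injective.ne (posIdx_injective.ne hne)))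
      (commute_anni_anniR (hsym _ _)) _ _ _ _

theorem commute_gam_star_gamR (hsym : ∀ a b, ε a b = ε b a) (hsq : ∀ a b, ε a b * ε b a = 1)
    (hreal : ∀ a b, star (ε a b) = ε a b) (m m' : Fin k) :
    Commute (gam ε μ m) (star (gamR ε μ m')) := by
  rw [star_gamR μ hreal]
  exact Commute.smul_add_smul (commute_crea_creaR (hsym _ _))
    (commute_crea_anniR (hsq _ _) (posIdx_ne_negI_posIdx m m'))
    (commute_anni_creaR (hsq _ _) (posIdx_ne_negI_posIdx m' m).symm)
    (commute_anni_anniR (hsym _ _)) _ _ _ _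

end RightGamma

section Cyclic

variable {I : Type*} [Fintype I] [LinearOrder I] {ε : I → I → ℂ}

theorem single_mem_of_creaR_add_anniR (K : Submodule ℂ (EuclideanSpace ℂ (Finset I)))
    {i i' : I} {A : Finset I} {a b : ℂ} (ha : a ≠ 0) (hε : ∀ j, ε i j ≠ 0) (hi : i ∈ A)
    (hK : (a • creaR ε i + b • anniR ε i') (single (A.erase i) 1) ∈ K)
    (hlt : ∀ B ⊂ A, single B 1 ∈ K) : single A 1 ∈ K := by
  obtain ⟨c, hc⟩ := exists_anniR_single_eq_smul ε i' (A.erase i)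
  have hlower : b • anniR ε i' (single (A.erase i) 1) ∈ K := by
    rw [hc]
    exact K.smul_mem _ <| K.smul_mem _ <|
      hlt _ ((erase_subset _ _).trans_ssubset (erase_ssubset hi))
  rw [add_apply, smul_apply, smul_apply, creaR_single ε i (notMem_erase i A), insert_erase hi,
    smul_smul, K.add_mem_iff_left hlower] at hK
  exact (K.smul_mem_iff (mul_ne_zero ha (prod_ne_zero_iff.2 fun j _ => hε j))).1 hK

end Cyclic

section Separating

variable {k : ℕ} {ε : Ik k → Ik k → ℂ} (μ : Fin k → ℝ)

theorem single_mem_of_gamR_invariant (hε : ∀ a b, ε a b ≠ 0)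
    (hreal : ∀ a b, star (ε a b) = ε a b) (hμ : ∀ m, μ m ≠ 0)
    (K : Submodule ℂ (EuclideanSpace ℂ (Finset (Ik k)))) (hK₀ : single ∅ 1 ∈ K)
    (hK : ∀ m, ∀ v ∈ K, gamR ε μ m v ∈ K ∧ star (gamR ε μ m) v ∈ K) (A : Finset (Ik k)) :
    single A 1 ∈ K := by
  induction A using Finset.strongInduction with
  | H A ih =>
  obtain rfl | ⟨i, hi⟩ := A.eq_empty_or_nonempty
  · exact hK₀
  obtain ⟨m, rfl | rfl⟩ := exists_eq_posIdx_or_eq_negI_posIdx i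
  all_goals have hμ' : (μ m : ℂ) ≠ 0 := Complex.ofReal_ne_zero.2 (hμ m)
  · have h := (hK m _ (ih _ (erase_ssubset hi))).2
    rw [star_gamR μ hreal] at h
    exact single_mem_of_creaR_add_anniR K hμ' (hε _) hi h ih
  · exact single_mem_of_creaR_add_anniR K (inv_ne_zero hμ') (hε _) hi
      (hK m _ (ih _ (erase_ssubset hi))).1 ih

theorem eq_zero_of_mem_centralizer_gamR (hε : ∀ a b, ε a b ≠ 0)
    (hreal : ∀ a b, star (ε a b) = ε a b) (hμ : ∀ m, μ m ≠ 0)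
    {T : EuclideanSpace ℂ (Finset (Ik k)) →L[ℂ] EuclideanSpace ℂ (Finset (Ik k))}
    (hT : T ∈ StarSubalgebra.centralizer ℂ (Set.range (gamR ε μ))) (h₀ : T (single ∅ 1) = 0) :
    T = 0 := by
  rw [StarSubalgebra.mem_centralizer_iff ℂ, Set.forall_mem_range] at hT
  have hker (g) (hg : g * T = T * g) (v) (hv : T v = 0) : T (g v) = 0 := by
    rw [← mul_apply_eq_comp, ← hg, mul_apply_eq_comp, hv, map_zero]
  refine EuclideanSpace.clm_ext_single fun A => ?_
  exact single_mem_of_gamR_invariant μ hε hreal hμ (LinearMap.ker T.toLinearMap) h₀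
    (fun m v hv => ⟨hker _ (hT m).1 v hv, hker _ (hT m).2 v hv⟩) A

end Separating

theorem stmt12_general (k : ℕ) (ε : Ik k → Ik k → ℂ)
    (hval : ∀ i j, ε i j = 1 ∨ ε i j = -1)
    (hsym : ∀ i j, ε i j = ε j i)
    (hdiag : ∀ i, ε i i = -1)
    (htw : ∀ i j, ε i j = ε (absI i) (absI j))
    (μ : Fin k → ℝ) (hμ : ∀ j, 1 ≤ μ j)
    (T : EuclideanSpace ℂ (Finset (Ik k)) →L[ℂ] EuclideanSpace ℂ (Finset (Ik k)))
    (hT : T ∈ StarAlgebra.adjoin ℂ (Set.range (gam ε μ)))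
    (h0 : T (EuclideanSpace.single (∅ : Finset (Ik k)) (1 : ℂ)) = 0) :
    T = 0 := by
  have hε (a b) : ε a b ≠ 0 := by rcases hval a b with h | h <;> simp [h]
  have hreal (a b) : star (ε a b) = ε a b := by rcases hval a b with h | h <;> simp [h]
  have hsq (a b) : ε a b * ε b a = 1 := by rw [hsym b a]; rcases hval a b with h | h <;> simp [h]
  have hΓ : StarAlgebra.adjoin ℂ (Set.range (gam ε μ)) ≤
      StarSubalgebra.centralizer ℂ (Set.range (gamR ε μ)) := by
    refine StarAlgebra.adjoin_le <| Set.range_subset_iff.2 fun m => ?_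
    refine (StarSubalgebra.mem_centralizer_iff ℂ).2 <| Set.forall_mem_range.2 fun m' => ?_
    exact ⟨(commute_gam_gamR μ hsym hsq hdiag htw m m').eq.symm,
      (commute_gam_star_gamR μ hsym hsq hreal m m').eq.symm⟩
  exact eq_zero_of_mem_centralizer_gamR μ hε hreal (fun m => (one_pos.trans_le (hμ m)).ne')
    (hΓ hT) h0

/-- In the twisted Baby Fock model, the vacuum vector `x_∅` is separating for
the unital *-algebra `Γ` generated by `γ_1, …, γ_k`: if `T ∈ Γ` and `T x_∅ = 0` then `T = 0`. -/
theorem stmt12 (k : ℕ) (hk : 1 ≤ k) (ε : Ik k → Ik k → ℂ)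
    (hval : ∀ i j, ε i j = 1 ∨ ε i j = -1)
    (hsym : ∀ i j, ε i j = ε j i)
    (hdiag : ∀ i, ε i i = -1)
    (htw : ∀ i j, ε i j = ε (absI i) (absI j))
    (μ : Fin k → ℝ) (hμ : ∀ j, 1 ≤ μ j)
    (T : EuclideanSpace ℂ (Finset (Ik k)) →L[ℂ] EuclideanSpace ℂ (Finset (Ik k)))
    (hT : T ∈ StarAlgebra.adjoin ℂ (Set.range (gam ε μ)))
    (h0 : T (EuclideanSpace.single (∅ : Finset (Ik k)) (1 : ℂ)) = 0) :
    T = 0 :=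
  stmt12_general k ε hval hsym hdiag htw μ hμ T hT h0
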